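/- Let S be the edge set of a spanning tree of G. Then c^S(x*) − c(x*) ≤ 2·Σ_{C∈ℒ_S} (x*(C) − 1)·c(S ∩ C), where c^S and c are extended linearly to vectors in ℝ^E_{≥0}. -/

import Mathlib

open Finset
open scoped Classical symmDiff

/-- A multigraph on vertex type `V` with edge type `E`, given by the two endpoints
of each edge. -/
structure MultiGraph (V E : Type*) where
  fst : E → V
  snd : E → V

namespace MultiGraph

variable {V E : Type*} [Fintype V] [DecidableEq V] [Fintype E] [DecidableEq E]
variable (G : MultiGraph V E)

/-- The cut `δ(U)`: the set of edges with exactly one endpoint in `U`. -/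
noncomputable def cut (U : Finset V) : Finset E :=
  univ.filter fun e => (G.fst e ∈ U ∧ G.snd e ∉ U) ∨ (G.fst e ∉ U ∧ G.snd e ∈ U)

/-- The degree of `v` with respect to the edge multiset `F`. -/
def deg (F : Multiset E) (v : V) : ℕ :=
  (F.map fun e => (if G.fst e = v then 1 else 0) + (if G.snd e = v then 1 else 0)).sum

/-- `odd(F)`: the set of vertices of odd degree in `(V, F)`. -/
noncomputable def oddVerts (F : Multiset E) : Finset V :=
  univ.filter fun v => Odd (G.deg F v)

/-- Adjacency via an edge satisfying the predicate `P`. -/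
def Adj (P : E → Prop) (a b : V) : Prop :=
  ∃ e, P e ∧ ((G.fst e = a ∧ G.snd e = b) ∨ (G.fst e = b ∧ G.snd e = a))

/-- `(V, {e | P e})` is a connected (spanning) subgraph. -/
def ConnectedOn (P : E → Prop) : Prop :=
  ∀ u w : V, Relation.ReflTransGen (G.Adj P) u w

/-- The graph `G` is connected. -/
def Connected : Prop := G.ConnectedOn fun _ => True

/-- A `T`-tour: a multi-subset `F` of the edges such that `(V, F)` is connected and
`odd(F) = T`. -/
def IsTTour (T : Finset V) (F : Multiset E) : Prop :=
  G.ConnectedOn (· ∈ F) ∧ G.oddVerts F = T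

/-- `S` is the edge set of a spanning tree of `G`. -/
def IsSpanningTree (S : Finset E) : Prop :=
  G.ConnectedOn (· ∈ S) ∧ S.card + 1 = Fintype.card V

/-- `δ(𝒲)`: the set of edges whose endpoints lie in different parts of the
partition `𝒲` of `V`. -/
noncomputable def partitionCut (W : Finpartition (univ : Finset V)) : Finset E :=
  univ.filter fun e => ∀ P ∈ W.parts, ¬(G.fst e ∈ P ∧ G.snd e ∈ P)

/-- Feasibility for the standard LP relaxation of the `T`-tour problem. -/
def LPFeasible (T : Finset V) (x : E → ℝ) : Prop :=
  (∀ e, 0 ≤ x e) ∧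
  (∀ U : Finset V, U.Nonempty → U ≠ univ → Even ((T ∩ U).card) →
    2 ≤ ∑ e ∈ G.cut U, x e) ∧
  (∀ W : Finpartition (univ : Finset V),
    (W.parts.card : ℝ) - 1 ≤ ∑ e ∈ G.partitionCut W, x e)

/-- `C` is a cut of `G`, i.e. `C = δ(U)` for some nonempty proper `U ⊆ V`. -/
def IsCut (C : Finset E) : Prop :=
  ∃ U : Finset V, U.Nonempty ∧ U ≠ univ ∧ C = G.cut U

/-- A narrow cut: a cut `C` with `x(C) < 2`. -/
def Narrow (x : E → ℝ) (C : Finset E) : Prop :=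
  G.IsCut C ∧ ∑ e ∈ C, x e < 2

/-- `𝒩`: the set of narrow cuts. -/
noncomputable def narrowCuts (x : E → ℝ) : Finset (Finset E) :=
  univ.filter fun C => G.Narrow x C

/-- A narrow cut `C` is lonely for `S` if `|S ∩ C| = 1`. -/
def Lonely (x : E → ℝ) (S C : Finset E) : Prop :=
  G.Narrow x C ∧ (S ∩ C).card = 1

/-- `ℒ_S`: the set of lonely cuts of `S`. -/
noncomputable def lonelyCuts (x : E → ℝ) (S : Finset E) : Finset (Finset E) :=
  univ.filter fun C => G.Lonely x S C

/-- `L_S = ∪_{C ∈ ℒ_S} (S ∩ C)`: the set of lonely edges of `S`. -/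
noncomputable def lonelyEdges (x : E → ℝ) (S : Finset E) : Finset E :=
  S.filter fun e => ∃ C, G.Lonely x S C ∧ e ∈ C

/-- The incidence vector `χ^F` of an edge set `F`. -/
def chi (F : Finset E) : E → ℝ := fun e => if e ∈ F then 1 else 0

/-- The vector `v^C = (1/(2 - x(C))) · Σ_{S : C ∈ ℒ_S} p_S · χ^{S ∩ C}`. -/
noncomputable def vC (x : E → ℝ) (p : Finset E → ℝ) (C : Finset E) : E → ℝ :=
  fun e => (1 / (2 - ∑ f ∈ C, x f)) *
    ∑ S : Finset E, (if G.Lonely x S C then p S else 0) * chi (S ∩ C) e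

/-- The modified cost
`c^S(e) = c(e) + 2·(Σ_{C ∈ ℒ_S : e ∈ C} c(S ∩ C) − max_{C ∈ ℒ_S : e ∈ C} c(S ∩ C))`,
where the maximum over the empty set is `0`. -/
noncomputable def modCost (c x : E → ℝ) (S : Finset E) (e : E) : ℝ :=
  c e + 2 * ((∑ C ∈ (G.lonelyCuts x S).filter (fun C => e ∈ C), ∑ f ∈ S ∩ C, c f)
    - (if h : ((G.lonelyCuts x S).filter (fun C => e ∈ C)).Nonempty
        then ((G.lonelyCuts x S).filter (fun C => e ∈ C)).sup' h (fun C => ∑ f ∈ S ∩ C, c f)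
        else 0))

/-- The set of vertices reachable from `v` using edges satisfying `P`. -/
noncomputable def reachSet (P : E → Prop) (v : V) : Finset V :=
  univ.filter fun w => Relation.ReflTransGen (G.Adj P) v w

end MultiGraph

/-!
With `γ C = c(S ∩ C)`, the sum term of `c^S` contributes exactly `Σ_{C ∈ ℒ_S} γ C · x*(C)`, so the
claim is `Σ_{C ∈ ℒ_S} γ C ≤ Σ_e x*_e · max_{C ∈ ℒ_S, e ∈ C} γ C`.

A lonely cut meets the tree `S` in one edge and is the fundamental cut of that edge, so a
subfamily `ℱ ⊆ ℒ_S` picks out `|ℱ|` distinct tree edges. Deleting them leaves a forest with at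
least `|ℱ| + 1` components, and two vertices on the same side of every cut of `ℱ` remain connected
in it; hence every edge between two components lies in `⋃ ℱ`, and the partition constraint of
the LP gives `x*(⋃ ℱ) ≥ |ℱ|`. A layer-cake argument over the values of `γ` turns these
inequalities into the claim.
-/

open Relation

section CoverMax

variable {E : Type*} [DecidableEq E]

noncomputable def coverMax (ℱ : Finset (Finset E)) (g : Finset E → ℝ) (e : E) : ℝ :=
  if h : (ℱ.filter (fun C => e ∈ C)).Nonempty then (ℱ.filter (fun C => e ∈ C)).sup' h g else 0

lemma coverMax_mono {ℱ ℱ' : Finset (Finset E)} (hℱ : ℱ' ⊆ ℱ) {g : Finset E → ℝ}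
    (hg : ∀ C ∈ ℱ, 0 ≤ g C) (e : E) : coverMax ℱ' g e ≤ coverMax ℱ g e := by
  have hsub : ℱ'.filter (fun C => e ∈ C) ⊆ ℱ.filter (fun C => e ∈ C) := filter_subset_filter _ hℱ
  unfold coverMax
  by_cases h : (ℱ.filter (fun C => e ∈ C)).Nonempty
  · rw [dif_pos h]
    split_ifs with h'
    · exact sup'_mono g hsub h'
    · obtain ⟨C, hC⟩ := h
      exact (hg C (mem_filter.1 hC).1).trans (le_sup' g hC)
  · rw [dif_neg h, dif_neg fun h' => h (h'.mono hsub)]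

lemma coverMax_add_const (ℱ : Finset (Finset E)) (g : Finset E → ℝ) (m : ℝ) (e : E) :
    coverMax ℱ (fun C => g C + m) e = coverMax ℱ g e + if e ∈ ℱ.biUnion id then m else 0 := by
  have hmem : e ∈ ℱ.biUnion id ↔ (ℱ.filter (fun C => e ∈ C)).Nonempty := by
    simp [filter_nonempty_iff]
  unfold coverMax
  by_cases h : (ℱ.filter (fun C => e ∈ C)).Nonempty
  · rw [dif_pos h, dif_pos h, if_pos (hmem.2 h), sup'_add]
  · rw [dif_neg h, dif_neg h, if_neg (mt hmem.1 h), add_zero]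

variable [Fintype E]

/-- Layer cake: lowering every weight by the least one, `g C₀`, drops `C₀` from the family and
costs `|ℱ| g C₀ ≤ x(⋃ ℱ) g C₀`. -/
lemma sum_le_sum_mul_coverMax {x : E → ℝ} (hx : ∀ e, 0 ≤ x e) {ℱ : Finset (Finset E)}
    (hℱ : ∀ ℱ' ⊆ ℱ, (#ℱ' : ℝ) ≤ ∑ e ∈ ℱ'.biUnion id, x e) {g : Finset E → ℝ}
    (hg : ∀ C ∈ ℱ, 0 ≤ g C) : ∑ C ∈ ℱ, g C ≤ ∑ e, x e * coverMax ℱ g e := by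
  induction ℱ using Finset.strongInduction generalizing g with
  | H ℱ ih =>
  rcases ℱ.eq_empty_or_nonempty with rfl | hne
  · simp [coverMax]
  obtain ⟨C₀, hC₀, hmin⟩ := exists_min_image ℱ g hne
  set m := g C₀
  set g' := fun C => g C - m
  have hg' : ∀ C ∈ ℱ, 0 ≤ g' C := fun C hC => sub_nonneg.2 (hmin C hC)
  have hsplit : ∑ C ∈ ℱ, g C = ∑ C ∈ ℱ.erase C₀, g' C + #ℱ * m := by
    rw [sum_erase ℱ (f := g') (sub_self m), sum_sub_distrib, sum_const, nsmul_eq_mul]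
    ring
  have hrecomb : ∀ e, coverMax ℱ g e = coverMax ℱ g' e + if e ∈ ℱ.biUnion id then m else 0 := by
    intro e
    rw [← coverMax_add_const]
    simp [g']
  have ih' := ih _ (erase_ssubset hC₀) (fun ℱ' h => hℱ ℱ' (h.trans (erase_subset _ _)))
    (fun C hC => hg' C (mem_of_mem_erase hC))
  calc ∑ C ∈ ℱ, g C = ∑ C ∈ ℱ.erase C₀, g' C + #ℱ * m := hsplit
    _ ≤ ∑ e, x e * coverMax (ℱ.erase C₀) g' e + (∑ e ∈ ℱ.biUnion id, x e) * m :=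
        add_le_add ih' (mul_le_mul_of_nonneg_right (hℱ ℱ subset_rfl) (hg C₀ hC₀))
    _ ≤ ∑ e, x e * coverMax ℱ g' e + (∑ e ∈ ℱ.biUnion id, x e) * m := by
        gcongr with e
        · exact hx e
        · exact coverMax_mono (erase_subset _ _) hg' e
    _ = ∑ e, x e * coverMax ℱ g e := by
        simp_rw [hrecomb, mul_add, sum_add_distrib, mul_ite, mul_zero, ← sum_filter, sum_mul,
          filter_mem_eq_inter, univ_inter]

lemma sum_sum_filter_mem_mul (ℱ : Finset (Finset E)) (g : Finset E → ℝ) (x : E → ℝ) :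
    ∑ e, (∑ C ∈ ℱ.filter (fun C => e ∈ C), g C) * x e = ∑ C ∈ ℱ, g C * ∑ e ∈ C, x e := by
  simp_rw [sum_mul, sum_filter, mul_sum]
  rw [sum_comm]
  simp_rw [sum_ite_mem, univ_inter]

end CoverMax

namespace MultiGraph

variable {V E : Type*} (G : MultiGraph V E)

instance (P : E → Prop) : Std.Symm (G.Adj P) :=
  ⟨fun _ _ ⟨e, he, h⟩ => ⟨e, he, h.symm⟩⟩

lemma adj_mono {P Q : E → Prop} (hPQ : ∀ e, P e → Q e) : G.Adj P ≤ G.Adj Q :=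
  fun _ _ ⟨e, he, h⟩ => ⟨e, hPQ e he, h⟩

def reachSetoid (P : E → Prop) : Setoid V :=
  ⟨ReflTransGen (G.Adj P), ⟨fun _ => .refl, fun h => symm h, .trans⟩⟩

lemma reflTransGen_endpoint {r : V → V → Prop} {f : E} {a b : V}
    (h : (G.fst f = a ∧ G.snd f = b) ∨ (G.fst f = b ∧ G.snd f = a)) :
    ReflTransGen r a (G.fst f) ∨ ReflTransGen r a (G.snd f) := by
  rcases h with ⟨rfl, -⟩ | ⟨-, rfl⟩
  · exact .inl .refl
  · exact .inr .refl

lemma reflTransGen_split {P P' : E → Prop} {f : E} (hP : ∀ e, P e → e = f ∨ P' e) {u w : V}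
    (h : ReflTransGen (G.Adj P) u w) :
    ReflTransGen (G.Adj P') u w ∨
      ((ReflTransGen (G.Adj P') u (G.fst f) ∨ ReflTransGen (G.Adj P') u (G.snd f)) ∧
        (ReflTransGen (G.Adj P') w (G.fst f) ∨ ReflTransGen (G.Adj P') w (G.snd f))) := by
  induction h with
  | refl => exact .inl .refl
  | @tail m w _ hmw ih =>
    obtain ⟨g, hg, hends⟩ := hmw
    rcases hP g hg with rfl | hg'
    · have hu : ReflTransGen (G.Adj P') u (G.fst g) ∨ ReflTransGen (G.Adj P') u (G.snd g) := by
        rcases ih with hum | ⟨hu, -⟩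
        · exact (G.reflTransGen_endpoint hends).imp hum.trans hum.trans
        · exact hu
      exact .inr ⟨hu, G.reflTransGen_endpoint hends.symm⟩
    · have hstep : G.Adj P' m w := ⟨g, hg', hends⟩
      rcases ih with hum | ⟨hu, hm⟩
      · exact .inl (hum.tail hstep)
      · exact .inr ⟨hu, hm.imp (.head (symm hstep)) (.head (symm hstep))⟩

section Cuts

variable [DecidableEq V] [Fintype E]

lemma mem_cut {U : Finset V} {e : E} : e ∈ G.cut U ↔ ¬(G.fst e ∈ U ↔ G.snd e ∈ U) := by
  simp only [cut, mem_filter, mem_univ, true_and]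
  tauto

lemma mem_iff_mem_of_reflTransGen {P : E → Prop} {U : Finset V} (hP : ∀ e, P e → e ∉ G.cut U)
    {u w : V} (h : ReflTransGen (G.Adj P) u w) : u ∈ U ↔ w ∈ U := by
  induction h with
  | refl => rfl
  | tail _ hmw ih =>
    obtain ⟨g, hg, hends⟩ := hmw
    have := hP g hg
    rw [mem_cut, not_not] at this
    rcases hends with ⟨rfl, rfl⟩ | ⟨rfl, rfl⟩ <;> tauto

lemma reflTransGen_of_unique_mem_cut {P : E → Prop} {U : Finset V} {f : E}
    (hf : f ∈ G.cut U) (hP : ∀ e, P e → e ∈ G.cut U → e = f) {u w : V}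
    (h : ReflTransGen (G.Adj P) u w) (huw : u ∈ U ↔ w ∈ U) :
    ReflTransGen (G.Adj fun e => P e ∧ e ≠ f) u w := by
  have hside : ∀ {a b}, ReflTransGen (G.Adj fun e => P e ∧ e ≠ f) a b → (a ∈ U ↔ b ∈ U) :=
    G.mem_iff_mem_of_reflTransGen fun e he hcut => he.2 (hP e he.1 hcut)
  rw [mem_cut] at hf
  rcases G.reflTransGen_split (P' := fun e => P e ∧ e ≠ f) (f := f)
    (fun e he => (eq_or_ne e f).imp_right fun hne => ⟨he, hne⟩) h with huw' | ⟨hu, hw⟩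
  · exact huw'
  · -- the endpoints of `f` lie on opposite sides of `U`, so `u` and `w` reach the same one
    rcases hu with hu | hu <;> rcases hw with hw | hw
    · exact hu.trans (symm hw)
    · have := hside hu; have := hside hw; tauto
    · have := hside hu; have := hside hw; tauto
    · exact hu.trans (symm hw)

lemma cut_eq_of_inter_eq_singleton [DecidableEq E] {S : Finset E} (hS : G.ConnectedOn (· ∈ S))
    {U U' : Finset V} {f : E} (hU : S ∩ G.cut U = {f}) (hU' : S ∩ G.cut U' = {f}) :
    G.cut U = G.cut U' := by
  have key : ∀ {U U' : Finset V}, S ∩ G.cut U = {f} → S ∩ G.cut U' = {f} →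
      ∀ u w, (u ∈ U ↔ w ∈ U) → (u ∈ U' ↔ w ∈ U') := by
    intro U U' hU hU' u w huw
    have hf : f ∈ S ∩ G.cut U := hU ▸ mem_singleton_self f
    have hfU' : ∀ e ∈ S, e ∈ G.cut U' → e = f := fun e he hcut =>
      mem_singleton.1 (hU' ▸ mem_inter.2 ⟨he, hcut⟩)
    refine G.mem_iff_mem_of_reflTransGen (P := fun e => e ∈ S ∧ e ≠ f)
      (fun e he hcut => he.2 (hfU' e he.1 hcut)) ?_
    refine G.reflTransGen_of_unique_mem_cut (mem_inter.1 hf).2 (fun e he hcut => ?_) (hS u w) huw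
    exact mem_singleton.1 (hU ▸ mem_inter.2 ⟨he, hcut⟩)
  ext e
  rw [mem_cut, mem_cut, not_congr]
  exact ⟨key hU hU' _ _, key hU' hU _ _⟩

end Cuts

section Fundamental

variable [Fintype V] [DecidableEq V] [Fintype E] [DecidableEq E]

lemma reflTransGen_sdiff_biUnion_inter {S : Finset E} (hS : G.ConnectedOn (· ∈ S))
    {ℱ : Finset (Finset E)} (hℱ : ∀ C ∈ ℱ, G.IsCut C ∧ #(S ∩ C) = 1) {u w : V}
    (huw : ∀ C ∈ ℱ, ∀ U, C = G.cut U → (u ∈ U ↔ w ∈ U)) :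
    ReflTransGen (G.Adj (· ∈ S \ ℱ.biUnion (S ∩ ·))) u w := by
  induction ℱ using Finset.induction_on with
  | empty => simpa using hS u w
  | @insert C ℱ _ ih =>
    obtain ⟨⟨U, -, -, rfl⟩, hcard⟩ := hℱ C (mem_insert_self C ℱ)
    obtain ⟨f, hf⟩ := card_eq_one.1 hcard
    have hfU : f ∈ G.cut U := (mem_inter.1 (hf ▸ mem_singleton_self f)).2
    have h := G.reflTransGen_of_unique_mem_cut hfU
      (fun e he hcut => mem_singleton.1 (hf ▸ mem_inter.2 ⟨(mem_sdiff.1 he).1, hcut⟩))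
      (ih (fun C hC => hℱ C (mem_insert_of_mem hC)) (fun C hC => huw C (mem_insert_of_mem hC)))
      (huw _ (mem_insert_self _ ℱ) U rfl)
    refine ReflTransGen.mono (G.adj_mono fun e he => ?_) _ _ h
    rw [biUnion_insert, hf]
    simp only [mem_sdiff, mem_union, mem_singleton] at he ⊢
    tauto

lemma card_biUnion_inter {S : Finset E} (hS : G.ConnectedOn (· ∈ S))
    {ℱ : Finset (Finset E)} (hℱ : ∀ C ∈ ℱ, G.IsCut C ∧ #(S ∩ C) = 1) :
    #(ℱ.biUnion (S ∩ ·)) = #ℱ := by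
  rw [card_biUnion, sum_congr rfl fun C hC => (hℱ C hC).2, card_eq_sum_ones]
  intro C hC C' hC' hne
  obtain ⟨⟨U, -, -, rfl⟩, hcard⟩ := hℱ C hC
  obtain ⟨⟨U', -, -, rfl⟩, hcard'⟩ := hℱ C' hC'
  obtain ⟨f, hf⟩ := card_eq_one.1 hcard
  obtain ⟨f', hf'⟩ := card_eq_one.1 hcard'
  rw [Function.onFun, hf, hf', disjoint_singleton]
  rintro rfl
  exact hne (G.cut_eq_of_inter_eq_singleton hS hf hf')

end Fundamental

section Components

variable [Fintype V]

lemma reachSet_eq_reachSet_iff {P : E → Prop} {u v : V} :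
    G.reachSet P u = G.reachSet P v ↔ ReflTransGen (G.Adj P) u v := by
  refine ⟨fun h => ?_, fun h => ?_⟩
  · have hv : v ∈ G.reachSet P v := by simp [reachSet, ReflTransGen.refl]
    rw [← h] at hv
    simpa [reachSet] using hv
  · ext w
    simp only [reachSet, mem_filter, mem_univ, true_and]
    exact ⟨(symm h).trans, h.trans⟩

lemma card_image_reachSet_le_insert [DecidableEq V] [DecidableEq E] (Q : Finset E) (e : E) :
    #(univ.image (G.reachSet (· ∈ Q))) ≤ #(univ.image (G.reachSet (· ∈ insert e Q))) + 1 := by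
  set R := G.reachSet (· ∈ Q)
  set R' := G.reachSet (· ∈ insert e Q)
  have hmerge : ∀ u v, R' u = R' v → R u ≠ R (G.snd e) → R v ≠ R (G.snd e) → R u = R v := by
    intro u v huv hu hv
    simp only [R, R', ne_eq, reachSet_eq_reachSet_iff] at huv hu hv ⊢
    rcases G.reflTransGen_split (fun g hg => mem_insert.1 hg) huv with huv | ⟨hu', hv'⟩
    · exact huv
    · exact (hu'.resolve_right hu).trans (symm (hv'.resolve_right hv))
  calc #(univ.image R)
      = #((univ.image R).erase (R (G.snd e))) + 1 :=
        (card_erase_add_one (mem_image_of_mem R (mem_univ _))).symm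
    _ ≤ #(univ.image R') + 1 := by
        refine Nat.add_le_add_right (card_le_card_of_forall_subsingleton
          (fun X Y => ∃ v, R v = X ∧ R' v = Y) (fun X hX => ?_) (fun Y _ => ?_)) 1
        · obtain ⟨-, v, -, rfl⟩ := mem_erase.1 hX |>.imp_right mem_image.1
          exact ⟨R' v, mem_image_of_mem R' (mem_univ v), v, rfl, rfl⟩
        · rintro _ ⟨hX₁, v₁, rfl, rfl⟩ _ ⟨hX₂, v₂, rfl, hv₂⟩
          exact hmerge v₁ v₂ hv₂.symm (mem_erase.1 hX₁).1 (mem_erase.1 hX₂).1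

lemma card_le_card_image_reachSet_add_card [DecidableEq V] [DecidableEq E] (Q : Finset E) :
    Fintype.card V ≤ #(univ.image (G.reachSet (· ∈ Q))) + #Q := by
  induction Q using Finset.induction_on with
  | empty =>
    have hinj : Function.Injective (G.reachSet (· ∈ (∅ : Finset E))) := fun u v h => by
      induction (G.reachSet_eq_reachSet_iff).1 h with
      | refl => rfl
      | tail _ hstep => obtain ⟨e, he, -⟩ := hstep; simp at he
    rw [card_image_of_injective _ hinj, card_univ, card_empty, add_zero]
  | @insert e Q he ih =>
    have := G.card_image_reachSet_le_insert Q e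
    rw [card_insert_of_notMem he]
    omega

end Components

section SpanningTree

variable [Fintype V] [DecidableEq V] [Fintype E] [DecidableEq E]

lemma card_le_sum_biUnion {T : Finset V} {x : E → ℝ} (hx : G.LPFeasible T x) {S : Finset E}
    (hS : G.IsSpanningTree S) {ℱ : Finset (Finset E)}
    (hℱ : ∀ C ∈ ℱ, G.IsCut C ∧ #(S ∩ C) = 1) :
    (#ℱ : ℝ) ≤ ∑ e ∈ ℱ.biUnion id, x e := by
  set F := ℱ.biUnion (S ∩ ·)
  set W := Finpartition.ofSetoid (G.reachSetoid (· ∈ S \ F))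
  have hcount : #ℱ + 1 ≤ #W.parts := by
    have hFS : F ⊆ S := biUnion_subset.2 fun C _ => inter_subset_left
    have h1 := G.card_le_card_image_reachSet_add_card (S \ F)
    have h2 := card_sdiff_add_card_eq_card hFS
    have h3 : #F = #ℱ := G.card_biUnion_inter hS.1 hℱ
    have h4 := hS.2
    change #ℱ + 1 ≤ #(univ.image (G.reachSet (· ∈ S \ F)))
    omega
  have hsub : G.partitionCut W ⊆ ℱ.biUnion id := by
    intro e he
    by_contra hne
    simp only [mem_biUnion, id, not_exists, not_and] at hne
    have hreach : ReflTransGen (G.Adj (· ∈ S \ F)) (G.fst e) (G.snd e) :=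
      G.reflTransGen_sdiff_biUnion_inter hS.1 hℱ fun C hC U hCU =>
        not_not.1 ((G.mem_cut).not.1 (hCU ▸ hne C hC))
    simp only [partitionCut, mem_filter, mem_univ, true_and] at he
    exact he (W.part (G.fst e)) (W.part_mem.2 (mem_univ _))
      ⟨W.mem_part (mem_univ _), Finpartition.mem_part_ofSetoid_iff_rel.2 hreach⟩
  calc (#ℱ : ℝ) ≤ #W.parts - 1 := by
        rw [le_sub_iff_add_le]; exact_mod_cast hcount
    _ ≤ ∑ e ∈ G.partitionCut W, x e := hx.2.2 W
    _ ≤ ∑ e ∈ ℱ.biUnion id, x e := sum_le_sum_of_subset_of_nonneg hsub fun e _ _ => hx.1 e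

end SpanningTree

end MultiGraph

namespace MultiGraph

variable {V E : Type*} [Fintype V] [DecidableEq V] [Fintype E] [DecidableEq E]

theorem reconnection_cost_bound_general (G : MultiGraph V E)
    (T : Finset V) (c : E → ℝ) (hc : ∀ e, 0 ≤ c e)
    (x : E → ℝ) (hx : G.LPFeasible T x)
    (S : Finset E) (hS : G.IsSpanningTree S) :
    (∑ e, G.modCost c x S e * x e) - (∑ e, c e * x e) ≤
      2 * ∑ C ∈ G.lonelyCuts x S, ((∑ f ∈ C, x f) - 1) * ∑ f ∈ S ∩ C, c f := by
  set ℒ := G.lonelyCuts x S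
  set γ : Finset E → ℝ := fun C => ∑ f ∈ S ∩ C, c f
  have hmod : ∀ e, G.modCost c x S e - c e =
      2 * ((∑ C ∈ ℒ.filter (fun C => e ∈ C), γ C) - coverMax ℒ γ e) := fun e => by
    simp only [modCost, coverMax, ℒ, γ, add_sub_cancel_left]
  have hℒ : ∀ C ∈ ℒ, G.IsCut C ∧ #(S ∩ C) = 1 := fun C hC =>
    have hC : G.Lonely x S C := (mem_filter.1 hC).2
    ⟨hC.1.1, hC.2⟩
  have hcover : ∑ C ∈ ℒ, γ C ≤ ∑ e, x e * coverMax ℒ γ e :=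
    sum_le_sum_mul_coverMax hx.1 (fun ℱ hℱ => G.card_le_sum_biUnion hx hS fun C hC => hℒ C (hℱ hC))
      fun C _ => sum_nonneg fun f _ => hc f
  calc (∑ e, G.modCost c x S e * x e) - (∑ e, c e * x e)
      = ∑ e, (G.modCost c x S e - c e) * x e := by
        rw [← sum_sub_distrib]; simp_rw [sub_mul]
    _ = 2 * (∑ e, (∑ C ∈ ℒ.filter (fun C => e ∈ C), γ C) * x e - ∑ e, x e * coverMax ℒ γ e) := by
        simp_rw [hmod, mul_assoc, ← mul_sum, sub_mul, sum_sub_distrib, mul_comm (coverMax ℒ γ _)]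
    _ ≤ 2 * (∑ C ∈ ℒ, γ C * ∑ e ∈ C, x e - ∑ C ∈ ℒ, γ C) := by
        rw [sum_sum_filter_mem_mul]; linarith
    _ = 2 * ∑ C ∈ ℒ, ((∑ f ∈ C, x f) - 1) * γ C := by
        rw [← sum_sub_distrib]; congr 1; exact sum_congr rfl fun C _ => by ring

/-- For every spanning tree `S`,
`c^S(x*) − c(x*) ≤ 2·Σ_{C ∈ ℒ_S} (x*(C) − 1)·c(S ∩ C)`. -/
theorem reconnection_cost_bound (G : MultiGraph V E) (hG : G.Connected)
    (T : Finset V) (hT : Even T.card) (c : E → ℝ) (hc : ∀ e, 0 ≤ c e)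
    (x : E → ℝ) (hx : G.LPFeasible T x)
    (S : Finset E) (hS : G.IsSpanningTree S) :
    (∑ e, G.modCost c x S e * x e) - (∑ e, c e * x e) ≤
      2 * ∑ C ∈ G.lonelyCuts x S, ((∑ f ∈ C, x f) - 1) * ∑ f ∈ S ∩ C, c f :=
  reconnection_cost_bound_general G T c hc x hx S hS

end MultiGraph
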